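/- For a random n×n puzzle with q jig types, the probability of the event UEA that all solutions are similar satisfies P(UEA) ≤ 4 · q^{−2n(n+1)} · binom((q⁴+q²+2q)/4 + n² − 1, n²). -/

import Mathlib

open Finset Filter

noncomputable section

/-- A piece of the `n × n` puzzle, identified with its cell in the original grid. -/
abbrev Cell (n : ℕ) := Fin n × Fin n

/-- The unit vector in direction `d` (`0` = right, `1` = up, `2` = left, `3` = down). -/
def dirVec (d : ZMod 4) : ℤ × ℤ :=
  if d = 0 then (1, 0) else if d = 1 then (0, 1) else if d = 2 then (-1, 0) else (0, -1)

/-- The integer coordinates of a cell. -/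
def cellZ {n : ℕ} (c : Cell n) : ℤ × ℤ := ((c.1 : ℤ), (c.2 : ℤ))

/-- A carving assigns a jig type (one of `q` possibilities) to each of the four
(cyclically ordered) sides of each of the `n²` pieces. -/
abbrev Carving (n q : ℕ) := Cell n → ZMod 4 → Fin q

/-- A carving is valid if each pair of coincident sides of adjacent pieces of the
original grid receives complementary jig types (`ι` is the complementation involution). -/
def IsValidCarving {n q : ℕ} (ι : Fin q → Fin q) (ω : Carving n q) : Prop :=
  ∀ p p' : Cell n, ∀ d : ZMod 4,
    cellZ p' = cellZ p + dirVec d → ω p' (d + 2) = ι (ω p d)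

open scoped Classical in
/-- The probability of the event `P` for a carving chosen uniformly at random among
all valid carvings. -/
def puzzleProb {n q : ℕ} (ι : Fin q → Fin q) (P : Carving n q → Prop) : ℝ :=
  ((Finset.univ.filter fun ω : Carving n q => IsValidCarving ι ω ∧ P ω).card : ℝ) /
  ((Finset.univ.filter fun ω : Carving n q => IsValidCarving ι ω).card : ℝ)

/-- A complete assembly: a bijective placement of the pieces onto the cells of the
`n × n` grid together with an orientation (`ℤ/4`) for each piece. -/
structure Assembly (n : ℕ) where
  pos : Equiv.Perm (Cell n)
  rot : Cell n → ZMod 4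

/-- The planted assembly keeps every piece in its original position and orientation. -/
def planted (n : ℕ) : Assembly n := ⟨Equiv.refl _, fun _ => 0⟩

/-- A complete assembly is feasible for the carving `ω` if all pairs of abutting sides
carry complementary jig types.  The side of piece `p` facing direction `d` after `p` is
rotated by `A.rot p` quarter turns is its original side `d - A.rot p`. -/
def Assembly.Feasible {n q : ℕ} (ι : Fin q → Fin q) (A : Assembly n) (ω : Carving n q) :
    Prop :=
  ∀ p p' : Cell n, ∀ d : ZMod 4,
    cellZ (A.pos p') = cellZ (A.pos p) + dirVec d →
    ω p' (d + 2 - A.rot p') = ι (ω p (d - A.rot p))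

/-- The carving of the grid obtained by reassembling the pieces according to `A`:
side `d` of the grid cell `c` receives the jig type of the corresponding side of the
piece placed on `c`. -/
def Assembly.carving {n q : ℕ} (A : Assembly n) (ω : Carving n q) : Carving n q :=
  fun c d => ω (A.pos.symm c) (d - A.rot (A.pos.symm c))

/-- Rotation of the grid by 90 degrees. -/
def rotCell {n : ℕ} : Equiv.Perm (Cell n) where
  toFun c := (c.2.rev, c.1)
  invFun c := (c.2, c.1.rev)
  left_inv c := by simp
  right_inv c := by simp

/-- Global rotation of a carving of the grid by 90 degrees. -/
def rotateCarving {n q : ℕ} (ω : Carving n q) : Carving n q :=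
  fun c d => ω (rotCell.symm c) (d - 1)

/-- Two solutions are similar if they differ only by a global rotation of the puzzle,
a permutation of pieces with identical carvings, and rotations of pieces whose carving
is rotation-invariant; equivalently, if they induce the same carving of the grid up to
a global rotation. -/
def PuzzleSimilar {n q : ℕ} (A B : Assembly n) (ω : Carving n q) : Prop :=
  ∃ r : Fin 4, B.carving ω = rotateCarving^[r.val] (A.carving ω)

/-- The planted assembly rotated globally by `r` quarter turns. -/
def rotatedPlanted (n : ℕ) (r : Fin 4) : Assembly n :=
  ⟨rotCell ^ r.val, fun _ => (r.val : ZMod 4)⟩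

/-- The cell `c` belongs to the `k × k` window with lower-left corner `(a, b)`. -/
def inWindow {n : ℕ} (a b k : ℕ) (c : Cell n) : Prop :=
  a ≤ c.1.val ∧ c.1.val < a + k ∧ b ≤ c.2.val ∧ c.2.val < b + k

open scoped Classical in
/-- The number of dual edges of the `k × k` window at `(a, b)` (each dual edge recorded
once, as `(c, c', d)` with `d ∈ {right, up}`) whose abutting jig types, for the carving
induced by the assembly `A`, form the complementary pair `{j, ι j}`. -/
def windowTypeCount {n q : ℕ} (ι : Fin q → Fin q) (A : Assembly n) (ω : Carving n q)
    (a b k : ℕ) (j : Fin q) : ℕ :=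
  (Finset.univ.filter fun x : Cell n × Cell n × Fin 2 =>
    inWindow a b k x.1 ∧ inWindow a b k x.2.1 ∧
    cellZ x.2.1 = cellZ x.1 + dirVec (x.2.2.val : ZMod 4) ∧
    (A.carving ω x.1 (x.2.2.val : ZMod 4) = j ∨
      A.carving ω x.1 (x.2.2.val : ZMod 4) = ι j)).card

open scoped Classical in
/-- The shape multiplicity of the `k × k` window at `(a, b)`: the sum, over unordered
complementary pairs `J = {j, ι j}`, of `⌊(number of dual edges of the window of type J)/2⌋`. -/
def windowSM {n q : ℕ} (ι : Fin q → Fin q) (A : Assembly n) (ω : Carving n q)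
    (a b k : ℕ) : ℕ :=
  ∑ j ∈ Finset.univ.filter (fun j : Fin q => j ≤ ι j),
    windowTypeCount ι A ω a b k j / 2

/-- A feasible complete assembly is `k`-good if every `k × k` window touching the boundary
of the puzzle has shape multiplicity at most `1`, and every other `k × k` window has shape
multiplicity at most `2`. -/
def KGood {n q : ℕ} (ι : Fin q → Fin q) (A : Assembly n) (ω : Carving n q) (k : ℕ) :
    Prop :=
  A.Feasible ι ω ∧
    ∀ a b : ℕ, a + k ≤ n → b + k ≤ n →
      windowSM ι A ω a b k ≤ 2 ∧
      ((a = 0 ∨ b = 0 ∨ a + k = n ∨ b + k = n) → windowSM ι A ω a b k ≤ 1)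

/-- A partial assembly: an injective placement of a subset of the pieces into the square
grid `ℤ²`, together with an orientation for each placed piece. -/
structure PartialAssembly (n : ℕ) where
  pieces : Finset (Cell n)
  pos : Cell n → ℤ × ℤ
  rot : Cell n → ZMod 4
  pos_inj : ∀ p ∈ pieces, ∀ p' ∈ pieces, pos p = pos p' → p = p'

/-- A partial assembly is feasible for `ω` if all pairs of abutting sides carry
complementary jig types. -/
def PartialAssembly.Feasible {n q : ℕ} (ι : Fin q → Fin q) (A : PartialAssembly n)
    (ω : Carving n q) : Prop :=
  ∀ p ∈ A.pieces, ∀ p' ∈ A.pieces, ∀ d : ZMod 4,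
    A.pos p' = A.pos p + dirVec d →
    ω p' (d + 2 - A.rot p') = ι (ω p (d - A.rot p))

open scoped Classical in
/-- The edges of the contour graph `C(A)`: the dual edges of `A` (each recorded once, as
`(p, p', d)` with `d ∈ {right, up}`, `p'` being placed in direction `d` from `p`) whose two
abutting piece sides are not coincident in the planted assembly. -/
def contourEdges {n : ℕ} (A : PartialAssembly n) : Finset (Cell n × Cell n × Fin 2) :=
  Finset.univ.filter fun x =>
    x.1 ∈ A.pieces ∧ x.2.1 ∈ A.pieces ∧
    A.pos x.2.1 = A.pos x.1 + dirVec (x.2.2.val : ZMod 4) ∧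
    ¬ (A.rot x.2.1 = A.rot x.1 ∧
        cellZ x.2.1 = cellZ x.1 + dirVec ((x.2.2.val : ZMod 4) - A.rot x.1))

/-- The piece sides lying across the edges of the contour graph of `A`. -/
def crossingSides {n : ℕ} (A : PartialAssembly n) : Set (Cell n × ZMod 4) :=
  {ps | ∃ x ∈ contourEdges A,
    ps = (x.1, (x.2.2.val : ZMod 4) - A.rot x.1) ∨
    ps = (x.2.1, (x.2.2.val : ZMod 4) + 2 - A.rot x.2.1)}

/-- Two piece sides are coincident in the planted assembly. -/
def CoincidentPlanted {n : ℕ} (ps ps' : Cell n × ZMod 4) : Prop :=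
  cellZ ps'.1 = cellZ ps.1 + dirVec ps.2 ∧ ps'.2 = ps.2 + 2

open scoped Classical in
/-- The shape multiplicity `sm(C(A), ω)` of the contour graph of `A` with respect to `ω`:
the sum, over unordered complementary pairs `J = {j, ι j}`, of
`⌊(number of contour edges of type J)/2⌋`. -/
def contourSM {n q : ℕ} (ι : Fin q → Fin q) (A : PartialAssembly n) (ω : Carving n q) :
    ℕ :=
  ∑ j ∈ Finset.univ.filter (fun j : Fin q => j ≤ ι j),
    ((contourEdges A).filter fun x =>
      ω x.1 ((x.2.2.val : ZMod 4) - A.rot x.1) = j ∨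
      ω x.1 ((x.2.2.val : ZMod 4) - A.rot x.1) = ι j).card / 2

end

/-!
Call the rotation class of a piece its *piece class*. If `ω'` is a valid carving with the same
multiset of piece classes as `ω`, rearranging and rotating the pieces of `ω` produces `ω'`, so
this rearrangement is a solution of `ω`. When `ω` has UEA, this solution is similar to the
planted one, so `ω'` is one of the four global rotations of `ω`. Hence at most `4` carvings with
UEA share a multiset of `n²` piece classes, and there are `C(N + n² - 1, n²)` such multisets,
where `N = (q⁴ + q² + 2q)/4` by Burnside's lemma (a rotation by `0, 1, 2, 3` quarter turns fixes
`q⁴, q, q², q` pieces). On the other side, labelling the `2n(n+1)` unit segments of the grid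
freely gives `q^{2n(n+1)}` distinct valid carvings.
-/

theorem Fintype.exists_equiv_comp_eq_of_map_univ_eq {α β : Type*} [Fintype α] [DecidableEq β]
    {u v : α → β} (h : univ.val.map u = univ.val.map v) :
    ∃ σ : α ≃ α, ∀ a, u (σ a) = v a := by
  have hfib : ∀ b, Fintype.card {a // v a = b} = Fintype.card {a // u a = b} := fun b => by
    have := congrArg (Multiset.count b) h
    rw [Multiset.count_map, Multiset.count_map] at this
    simp only [Fintype.card_subtype, card_def, filter_val, eq_comm (b := b), this]
  exact ⟨Equiv.ofFiberEquiv fun b => Fintype.equivOfCardEq (hfib b), Equiv.ofFiberEquiv_map _⟩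

abbrev Piece (q : ℕ) := ZMod 4 → Fin q

instance (q : ℕ) : AddAction (ZMod 4) (Piece q) := arrowAddAction

abbrev PieceClass (q : ℕ) := AddAction.orbitRel.Quotient (ZMod 4) (Piece q)

noncomputable instance (q : ℕ) : Fintype (PieceClass q) := Fintype.ofFinite _

namespace Piece

variable {q : ℕ}

lemma vadd_apply (r : ZMod 4) (f : Piece q) (d : ZMod 4) : (r +ᵥ f) d = f (d - r) := by
  rw [sub_eq_neg_add]; rfl

lemma mem_fixedBy_iff {r : ZMod 4} {f : Piece q} :
    f ∈ AddAction.fixedBy (Piece q) r ↔ ∀ d, f (d - r) = f d := by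
  simp only [AddAction.mem_fixedBy, funext_iff, vadd_apply]

lemma eq_const_of_mem_fixedBy_one {f : Piece q}
    (hf : f ∈ AddAction.fixedBy (Piece q) (1 : ZMod 4)) (d : ZMod 4) : f d = f 0 := by
  have hstab : d ∈ AddAction.stabilizer (ZMod 4) f := by
    simpa using
      (AddAction.stabilizer (ZMod 4) f).nsmul_mem (AddAction.mem_stabilizer_iff.2 hf) d.val
  simpa [vadd_apply] using (congrFun hstab d).symm

def fixedByOneEquiv : AddAction.fixedBy (Piece q) (1 : ZMod 4) ≃ Fin q where
  toFun f := f.1 0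
  invFun a := ⟨fun _ => a, mem_fixedBy_iff.2 fun _ => rfl⟩
  left_inv f := Subtype.ext <| funext fun d => (eq_const_of_mem_fixedBy_one f.2 d).symm
  right_inv _ := rfl

def fixedByThreeEquiv : AddAction.fixedBy (Piece q) (3 : ZMod 4) ≃ Fin q :=
  (Equiv.setCongr (AddAction.fixedBy_neg (Piece q) (1 : ZMod 4))).trans fixedByOneEquiv

def fixedByTwoEquiv : AddAction.fixedBy (Piece q) (2 : ZMod 4) ≃ Fin q × Fin q where
  toFun f := (f.1 0, f.1 1)
  invFun a := ⟨![a.1, a.2, a.1, a.2], mem_fixedBy_iff.2 fun d => by fin_cases d <;> rfl⟩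
  left_inv f := by
    have h := mem_fixedBy_iff.1 f.2
    refine Subtype.ext <| funext fun d => ?_
    fin_cases d
    · rfl
    · rfl
    · exact (h 0).symm
    · exact (h 1).symm
  right_inv _ := rfl

theorem card_pieceClass : Fintype.card (PieceClass q) = (q ^ 4 + q ^ 2 + 2 * q) / 4 := by
  have h := AddAction.sum_card_fixedBy_eq_card_orbits_mul_card_addGroup (ZMod 4) (Piece q)
  rw [show (univ : Finset (ZMod 4)) = {0, 1, 2, 3} by decide, sum_insert (by decide),
    sum_insert (by decide), sum_insert (by decide), sum_singleton,
    Fintype.card_congr (Equiv.setCongr (AddAction.fixedBy_zero_eq_univ _ _)),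
    Fintype.card_congr fixedByOneEquiv, Fintype.card_congr fixedByThreeEquiv,
    Fintype.card_congr fixedByTwoEquiv] at h
  simp only [Fintype.card_setUniv, Fintype.card_fun, Fintype.card_prod, Fintype.card_fin,
    ZMod.card, ← sq] at h
  change _ = Fintype.card (PieceClass q) * 4 at h
  omega

end Piece

section

variable {n q : ℕ}

theorem Assembly.feasible_iff_isValidCarving_carving {ι : Fin q → Fin q} {A : Assembly n}
    {ω : Carving n q} : A.Feasible ι ω ↔ IsValidCarving ι (A.carving ω) := by
  constructor
  · intro h c c' d hcc
    simpa [Assembly.carving] using h _ _ d (by simpa using hcc)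
  · intro h p p' d hpp
    simpa [Assembly.carving] using h _ _ d hpp

@[simp]
theorem planted_carving (ω : Carving n q) : (planted n).carving ω = ω := by
  funext c d
  simp [planted, Assembly.carving]

def pieceClasses (ω : Carving n q) : Sym (PieceClass q) (n ^ 2) :=
  ⟨univ.val.map fun p => Quotient.mk _ (ω p), by simp [sq]⟩

theorem exists_assembly_carving_eq_of_pieceClasses_eq {ω ω' : Carving n q}
    (h : pieceClasses ω = pieceClasses ω') : ∃ B : Assembly n, B.carving ω = ω' := by
  classical
  obtain ⟨σ, hσ⟩ := Fintype.exists_equiv_comp_eq_of_map_univ_eq (congrArg Subtype.val h)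
  choose r hr using fun p => AddAction.mem_orbit_iff.1 (Quotient.eq''.1 (hσ p).symm)
  refine ⟨⟨σ.symm, fun p => r (σ.symm p)⟩, funext fun c => funext fun d => ?_⟩
  simp [Assembly.carving, ← hr c, Piece.vadd_apply]

def IsUEA (ι : Fin q → Fin q) (ω : Carving n q) : Prop :=
  ∀ A B : Assembly n, A.Feasible ι ω → B.Feasible ι ω → PuzzleSimilar A B ω

theorem IsUEA.eq_rotate_of_pieceClasses_eq {ι : Fin q → Fin q} {ω ω' : Carving n q}
    (hω : IsUEA ι ω) (hv : IsValidCarving ι ω) (hv' : IsValidCarving ι ω')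
    (h : pieceClasses ω = pieceClasses ω') : ∃ r : Fin 4, rotateCarving^[r.val] ω = ω' := by
  obtain ⟨B, rfl⟩ := exists_assembly_carving_eq_of_pieceClasses_eq h
  obtain ⟨r, hr⟩ := hω (planted n) B (by simpa [Assembly.feasible_iff_isValidCarving_carving])
    (Assembly.feasible_iff_isValidCarving_carving.2 hv')
  exact ⟨r, by simpa using hr.symm⟩

open scoped Classical in
theorem card_validUEA_le (ι : Fin q → Fin q) :
    #{ω : Carving n q | IsValidCarving ι ω ∧ IsUEA ι ω} ≤
      4 * ((q ^ 4 + q ^ 2 + 2 * q) / 4 + n ^ 2 - 1).choose (n ^ 2) := by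
  set S : Finset (Carving n q) := {ω | IsValidCarving ι ω ∧ IsUEA ι ω}
  have hfiber : ∀ c ∈ S.image pieceClasses, #{ω ∈ S | pieceClasses ω = c} ≤ 4 := by
    simp only [mem_image]
    rintro c ⟨ω₀, hω₀, rfl⟩
    obtain ⟨hv₀, hU₀⟩ := (mem_filter.1 hω₀).2
    calc #{ω ∈ S | pieceClasses ω = pieceClasses ω₀}
        ≤ #(univ.image fun r : Fin 4 => rotateCarving^[r.val] ω₀) := by
          refine card_le_card fun ω hω => ?_
          obtain ⟨hωS, hωc⟩ := mem_filter.1 hω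
          obtain ⟨r, hr⟩ :=
            hU₀.eq_rotate_of_pieceClasses_eq hv₀ (mem_filter.1 hωS).2.1 hωc.symm
          exact mem_image.2 ⟨r, mem_univ r, hr⟩
      _ ≤ 4 := card_image_le.trans_eq (by simp)
  calc #S ≤ 4 * #(S.image pieceClasses) := card_le_mul_card_image S 4 hfiber
    _ ≤ 4 * Fintype.card (Sym (PieceClass q) (n ^ 2)) := by gcongr; exact card_le_univ _
    _ = _ := by rw [Sym.card_sym_eq_choose, Piece.card_pieceClass]

lemma dirVec_add_two (d : ZMod 4) : dirVec (d + 2) = -dirVec d := by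
  fin_cases d <;> decide

lemma cellZ_eq_add_dirVec_zero {p p' : Cell n} :
    cellZ p' = cellZ p + dirVec 0 ↔ (p'.1 : ℕ) = p.1 + 1 ∧ p'.2 = p.2 := by
  simp only [cellZ, dirVec, ↓reduceIte, Prod.mk_add_mk, Prod.ext_iff, Fin.ext_iff]
  omega

lemma cellZ_eq_add_dirVec_one {p p' : Cell n} :
    cellZ p' = cellZ p + dirVec 1 ↔ p'.1 = p.1 ∧ (p'.2 : ℕ) = p.2 + 1 := by
  simp only [cellZ, dirVec, show (1 : ZMod 4) ≠ 0 by decide, ↓reduceIte, Prod.mk_add_mk,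
    Prod.ext_iff, Fin.ext_iff]
  omega

theorem isValidCarving_of_right_of_up {ι : Fin q → Fin q} (hι : Function.Involutive ι)
    {ω : Carving n q}
    (hright : ∀ p p' : Cell n, cellZ p' = cellZ p + dirVec 0 → ω p' 2 = ι (ω p 0))
    (hup : ∀ p p' : Cell n, cellZ p' = cellZ p + dirVec 1 → ω p' 3 = ι (ω p 1)) :
    IsValidCarving ι ω := by
  have hforward : ∀ p p' : Cell n, ∀ d : ZMod 4, d = 0 ∨ d = 1 →
      cellZ p' = cellZ p + dirVec d → ω p' (d + 2) = ι (ω p d) := by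
    rintro p p' d (rfl | rfl)
    exacts [hright p p', hup p p']
  intro p p' d hd
  obtain hd01 | ⟨e, he01, rfl⟩ :
      (d = 0 ∨ d = 1) ∨ ∃ e : ZMod 4, (e = 0 ∨ e = 1) ∧ d = e + 2 := by
    fin_cases d
    exacts [.inl (.inl rfl), .inl (.inr rfl), .inr ⟨0, .inl rfl, rfl⟩,
      .inr ⟨1, .inr rfl, rfl⟩]
  · exact hforward p p' d hd01 hd
  · have hback : cellZ p = cellZ p' + dirVec e := by
      rw [hd, dirVec_add_two, neg_add_cancel_right]
    rw [hforward p' p e he01 hback, hι, add_assoc, show (2 + 2 : ZMod 4) = 0 by decide, add_zero]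

/-- `.inl (i, j)` is the vertical unit segment at abscissa `i` in row `j`, and `.inr (i, j)` the
horizontal one at ordinate `j` in column `i`. -/
abbrev GridEdge (n : ℕ) := (Fin (n + 1) × Fin n) ⊕ (Fin n × Fin (n + 1))

/-- The label of a segment is the jig type seen from the cell to its left (or below it); the cell
on the other side sees its complement. -/
def carvingOfEdgeLabels (ι : Fin q → Fin q) (x : GridEdge n → Fin q) : Carving n q :=
  fun p d =>
    if d = 0 then x (.inl (p.1.succ, p.2))
    else if d = 1 then x (.inr (p.1, p.2.succ))
    else if d = 2 then ι (x (.inl (p.1.castSucc, p.2)))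
    else ι (x (.inr (p.1, p.2.castSucc)))

section carvingOfEdgeLabels

variable (ι : Fin q → Fin q) (x : GridEdge n → Fin q) (p : Cell n)

@[simp] lemma carvingOfEdgeLabels_zero :
    carvingOfEdgeLabels ι x p 0 = x (.inl (p.1.succ, p.2)) :=
  rfl

@[simp] lemma carvingOfEdgeLabels_one :
    carvingOfEdgeLabels ι x p 1 = x (.inr (p.1, p.2.succ)) :=
  rfl

@[simp] lemma carvingOfEdgeLabels_two :
    carvingOfEdgeLabels ι x p 2 = ι (x (.inl (p.1.castSucc, p.2))) :=
  rfl

@[simp] lemma carvingOfEdgeLabels_three :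
    carvingOfEdgeLabels ι x p 3 = ι (x (.inr (p.1, p.2.castSucc))) :=
  rfl

end carvingOfEdgeLabels

theorem isValidCarving_carvingOfEdgeLabels {ι : Fin q → Fin q} (hι : Function.Involutive ι)
    (x : GridEdge n → Fin q) : IsValidCarving ι (carvingOfEdgeLabels ι x) := by
  refine isValidCarving_of_right_of_up hι (fun p p' h => ?_) (fun p p' h => ?_)
  · obtain ⟨h1, h2⟩ := cellZ_eq_add_dirVec_zero.1 h
    have hedge : p'.1.castSucc = p.1.succ := Fin.ext h1
    simp [hedge, h2]
  · obtain ⟨h1, h2⟩ := cellZ_eq_add_dirVec_one.1 h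
    have hedge : p'.2.castSucc = p.2.succ := Fin.ext h2
    simp [hedge, h1]

theorem injective_carvingOfEdgeLabels {ι : Fin q → Fin q} (hι : Function.Involutive ι) :
    Function.Injective (carvingOfEdgeLabels (n := n) ι) := by
  intro x y h
  have hside (p : Cell n) (d : ZMod 4) :
      carvingOfEdgeLabels ι x p d = carvingOfEdgeLabels ι y p d := by rw [h]
  funext e
  rcases e with ⟨k, j⟩ | ⟨i, k⟩
  · induction k using Fin.cases with
    | zero => simpa using hι.injective (hside (⟨0, j.pos⟩, j) 2)
    | succ i => simpa using hside (i, j) 0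
  · induction k using Fin.cases with
    | zero => simpa using hι.injective (hside (i, ⟨0, i.pos⟩) 3)
    | succ j => simpa using hside (i, j) 1

open scoped Classical in
theorem pow_le_card_validCarvings {ι : Fin q → Fin q} (hι : Function.Involutive ι) :
    q ^ (2 * n * (n + 1)) ≤ #{ω : Carving n q | IsValidCarving ι ω} := by
  calc q ^ (2 * n * (n + 1)) = #(univ : Finset (GridEdge n → Fin q)) := by
        rw [card_univ, Fintype.card_fun]
        simp only [Fintype.card_sum, Fintype.card_prod, Fintype.card_fin]
        ring
    _ ≤ _ := card_le_card_of_injOn _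
        (fun x _ => mem_filter.2 ⟨mem_univ _, isValidCarving_carvingOfEdgeLabels hι x⟩)
        (injective_carvingOfEdgeLabels hι).injOn

end

theorem statement_4_general (n q : ℕ) (hq : 2 ≤ q)
    (ι : Fin q → Fin q) (hι : ι ∘ ι = id) :
    puzzleProb ι (fun ω : Carving n q =>
        ∀ A B : Assembly n, A.Feasible ι ω → B.Feasible ι ω → PuzzleSimilar A B ω) ≤
      4 * (q : ℝ) ^ (-(2 * (n : ℤ) * (n + 1))) *
        (Nat.choose ((q ^ 4 + q ^ 2 + 2 * q) / 4 + n ^ 2 - 1) (n ^ 2) : ℝ) := by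
  classical
  have hnum : (#{ω : Carving n q | IsValidCarving ι ω ∧ IsUEA ι ω} : ℝ) ≤
      4 * ((q ^ 4 + q ^ 2 + 2 * q) / 4 + n ^ 2 - 1).choose (n ^ 2) := by
    exact_mod_cast card_validUEA_le ι
  have hden :
      ((q ^ (2 * n * (n + 1)) : ℕ) : ℝ) ≤ #{ω : Carving n q | IsValidCarving ι ω} := by
    exact_mod_cast pow_le_card_validCarvings (n := n) fun x => congrFun hι x
  have hexp : (-(2 * (n : ℤ) * (n + 1))) = -((2 * n * (n + 1) : ℕ) : ℤ) := by push_cast; ring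
  have hq₀ : (0 : ℝ) < q := by exact_mod_cast (show 0 < q by omega)
  rw [puzzleProb, hexp, zpow_neg, zpow_natCast, mul_right_comm, ← div_eq_mul_inv]
  exact div_le_div₀ (by positivity) hnum (pow_pos hq₀ _) (by exact_mod_cast hden)

/-- For a random `n × n` puzzle with `q` jig types, the probability of the
event UEA that all solutions are similar satisfies
`P(UEA) ≤ 4 · q^{−2n(n+1)} · C((q⁴+q²+2q)/4 + n² − 1, n²)`. -/
theorem statement_4 (n q : ℕ) (hn : 1 ≤ n) (hq : 2 ≤ q)
    (ι : Fin q → Fin q) (hι : ι ∘ ι = id) :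
    puzzleProb ι (fun ω : Carving n q =>
        ∀ A B : Assembly n, A.Feasible ι ω → B.Feasible ι ω → PuzzleSimilar A B ω) ≤
      4 * (q : ℝ) ^ (-(2 * (n : ℤ) * (n + 1))) *
        (Nat.choose ((q ^ 4 + q ^ 2 + 2 * q) / 4 + n ^ 2 - 1) (n ^ 2) : ℝ) :=
  statement_4_general n q hq ι hι
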